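/- arXiv:2202.07324 — 2 statements merged into one kernel-verified Lean document; each statement's English description precedes it below -/
import Mathlib

section
/- Let T, D be 2×2 real matrices, let S = diag(1,-1), and suppose T has real eigenvalues λ₁, λ₂ with |λ₁| < 1 < |λ₂| and eigenvector matrix V (columns are eigenvectors for λ₁, λ₂ respectively, with V invertible). Suppose U₀ ∈ ℝ² satisfies: (i) (-V₂₁, V₁₁)·(D·U₀) = 0 and (ii) (-V₂₁, V₁₁)·(S·U₀) = 0, with U₀ ≠ 0 and (V₁₁, V₂₁) ≠ (0,0). Then U₀ is proportional to (V₁₁, -V₂₁)ᵀ, the sequence w(n) = Tⁿ⁻¹·D·U₀ (n ≥ 1) tends to 0 as n → ∞, and the sequence z(n) = S·T^{-n}·S·U₀ (n ≤ 0) tends to 0 as n → -∞. -/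
/-!
Conditions (i) and (ii) say that `D U₀` and `S U₀` are multiples of the decaying eigenvector
`v = (V₁₁, V₂₁)` of `T`. Since `S` is an involution, `U₀ = S (S U₀)` is then a multiple of `S v`,
and both sequences are `λ₁ⁿ` times a fixed vector (pushed through `S` in the second case),
so they tend to `0` because `|λ₁| < 1`.
-/

open Filter Topology Matrix

theorem exists_eq_smul_of_cross_eq_zero {K : Type*} [Field K] {v x : Fin 2 → K} (hv : v ≠ 0)
    (h : -(v 1) * x 0 + v 0 * x 1 = 0) : ∃ k : K, x = k • v := by
  by_cases h0 : v 0 = 0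
  · have h1 : v 1 ≠ 0 := fun h1 => hv (by ext i; fin_cases i <;> assumption)
    refine ⟨x 1 / v 1, ?_⟩
    have hx0 : x 0 = 0 := by simpa [h0, h1] using h
    ext i; fin_cases i <;> simp [hx0, h0, h1]
  · refine ⟨x 0 / v 0, ?_⟩
    ext i; fin_cases i
    · simp [h0]
    · simp only [Fin.mk_one, Pi.smul_apply, smul_eq_mul]
      field_simp
      linear_combination h

theorem Matrix.pow_mulVec_of_mulVec_eq_smul {n R : Type*} [Fintype n] [DecidableEq n]
    [CommSemiring R] {T : Matrix n n R} {v : n → R} {μ : R} (hv : T *ᵥ v = μ • v) (k : ℕ) :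
    (T ^ k) *ᵥ v = μ ^ k • v := by
  induction k with
  | zero => simp
  | succ k ih => rw [pow_succ, ← mulVec_mulVec, hv, mulVec_smul, ih, smul_smul, pow_succ']

theorem Matrix.tendsto_pow_mulVec_of_mulVec_eq_smul {n 𝕜 : Type*} [Fintype n] [DecidableEq n]
    [NormedField 𝕜] {T : Matrix n n 𝕜} {v : n → 𝕜} {μ : 𝕜} (hv : T *ᵥ v = μ • v)
    (hμ : ‖μ‖ < 1) : Tendsto (fun k : ℕ => (T ^ k) *ᵥ v) atTop (𝓝 0) := by
  simp_rw [pow_mulVec_of_mulVec_eq_smul hv]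
  simpa using (tendsto_pow_atTop_nhds_zero_of_norm_lt_one hμ).smul_const v

theorem Matrix.mulVec_diag_one_neg_one {R : Type*} [Ring R] (x : Fin 2 → R) :
    !![1, 0; 0, -1] *ᵥ x = ![x 0, -x 1] := by
  ext i; fin_cases i <;> simp [mulVec, dotProduct, Fin.sum_univ_two]

theorem stmt_15_general (T D S V : Matrix (Fin 2) (Fin 2) ℝ)
    (hS : S = !![1, 0; 0, -1])
    (lam₁ : ℝ) (h₁ : |lam₁| < 1)
    (hcol₁ : T.mulVec (fun i => V i 0) = lam₁ • (fun i => V i 0))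
    (U₀ : Fin 2 → ℝ)
    (hVcol : ¬(V 0 0 = 0 ∧ V 1 0 = 0))
    (hi : -(V 1 0) * (D.mulVec U₀ 0) + V 0 0 * (D.mulVec U₀ 1) = 0)
    (hii : -(V 1 0) * (S.mulVec U₀ 0) + V 0 0 * (S.mulVec U₀ 1) = 0) :
    (∃ c : ℝ, U₀ = c • ![V 0 0, -(V 1 0)]) ∧
    Filter.Tendsto (fun n : ℕ => (T ^ (n - 1)).mulVec (D.mulVec U₀)) Filter.atTop (nhds 0) ∧
    Filter.Tendsto (fun m : ℕ => (S * T ^ m * S).mulVec U₀) Filter.atTop (nhds 0) := by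
  set v : Fin 2 → ℝ := fun i => V i 0
  have hv : v ≠ 0 := fun h => hVcol ⟨congrFun h 0, congrFun h 1⟩
  have hdecay : ∀ a : ℝ, Tendsto (fun k : ℕ => (T ^ k) *ᵥ (a • v)) atTop (𝓝 0) := fun a =>
    tendsto_pow_mulVec_of_mulVec_eq_smul (by rw [mulVec_smul, hcol₁, smul_comm]) h₁
  obtain ⟨d, hDU⟩ := exists_eq_smul_of_cross_eq_zero hv hi
  obtain ⟨c, hSU⟩ := exists_eq_smul_of_cross_eq_zero hv hii
  refine ⟨⟨c, ?_⟩, ?_, ?_⟩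
  · have h := congrFun hSU
    rw [hS, mulVec_diag_one_neg_one] at h
    ext i; fin_cases i
    · simpa using h 0
    · simpa [neg_eq_iff_eq_neg] using h 1
  · rw [hDU]
    exact (hdecay d).comp (tendsto_sub_atTop_nat 1)
  · have hconj : ∀ m : ℕ, (S * T ^ m * S) *ᵥ U₀ = S *ᵥ ((T ^ m) *ᵥ (c • v)) := fun m => by
      rw [← hSU, mulVec_mulVec, mulVec_mulVec, Matrix.mul_assoc]
    simp_rw [hconj]
    exact ((continuous_const.matrix_mulVec continuous_id).tendsto' 0 0 (mulVec_zero S)).comp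
      (hdecay c)

theorem stmt_15 (T D S V : Matrix (Fin 2) (Fin 2) ℝ)
    (hS : S = !![1, 0; 0, -1])
    (lam₁ lam₂ : ℝ) (h₁ : |lam₁| < 1) (h₂ : 1 < |lam₂|)
    (hV : IsUnit V.det)
    (hcol₁ : T.mulVec (fun i => V i 0) = lam₁ • (fun i => V i 0))
    (hcol₂ : T.mulVec (fun i => V i 1) = lam₂ • (fun i => V i 1))
    (U₀ : Fin 2 → ℝ) (hU₀ : U₀ ≠ 0)
    (hVcol : ¬(V 0 0 = 0 ∧ V 1 0 = 0))
    (hi : -(V 1 0) * (D.mulVec U₀ 0) + V 0 0 * (D.mulVec U₀ 1) = 0)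
    (hii : -(V 1 0) * (S.mulVec U₀ 0) + V 0 0 * (S.mulVec U₀ 1) = 0) :
    (∃ c : ℝ, U₀ = c • ![V 0 0, -(V 1 0)]) ∧
    Filter.Tendsto (fun n : ℕ => (T ^ (n - 1)).mulVec (D.mulVec U₀)) Filter.atTop (nhds 0) ∧
    Filter.Tendsto (fun m : ℕ => (S * T ^ m * S).mulVec U₀) Filter.atTop (nhds 0) :=
  stmt_15_general T D S V hS lam₁ h₁ hcol₁ U₀ hVcol hi hii
end

section
/- Let α > 0 and p, q ∈ ℝ with pq > 0. Suppose f, g : ℝ → ℝ are continuous, twice continuously differentiable on ℝ \ {0}, decay to 0 at ±∞, satisfy f'' = α²f and g'' = α²g on ℝ \ {0}, and have derivative jumps at 0 given by f'(0⁺) - f'(0⁻) = -p·g(0) and g'(0⁺) - g'(0⁻) = -q·f(0), with (f(0), g(0)) ≠ (0,0). Then α = (1/2)·√(pq). -/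
/-!
On each half-line a solution of `h'' = α² h` is a combination of `e^{αx}` and `e^{-αx}`, and decay
at infinity kills the growing mode, so the one-sided slopes at `0` are `∓α` times the value there.
The jump conditions then read `2α f(0) = p g(0)` and `2α g(0) = q f(0)`; neither value can vanish
without the other, so multiplying them gives `4α² = pq`.
-/

open Set Filter Topology Real

theorem IsOpen.exists_eq_mul_exp_of_hasDerivAt {s : Set ℝ} (hs : IsOpen s)
    (hs' : IsPreconnected s) {c : ℝ} {w : ℝ → ℝ} (hw : ∀ x ∈ s, HasDerivAt w (c * w x) x) :
    ∃ C, ∀ x ∈ s, w x = C * exp (c * x) := by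
  have hu : ∀ x ∈ s, HasDerivAt (fun y => exp (-c * y) * w y) 0 x := fun x hx =>
    ((((hasDerivAt_id' x).const_mul (-c)).exp).mul (hw x hx)).congr_deriv (by ring)
  obtain ⟨C, hC⟩ := hs.exists_is_const_of_deriv_eq_zero hs'
    (fun x hx => (hu x hx).differentiableAt.differentiableWithinAt) (fun x hx => (hu x hx).deriv)
  refine ⟨C, fun x hx => ?_⟩
  rw [← hC x hx, mul_right_comm, ← exp_add]
  simp

theorem tendsto_exp_mul_atTop_nhds_zero {c : ℝ} (hc : c < 0) :
    Tendsto (fun x => exp (c * x)) atTop (𝓝 0) :=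
  tendsto_exp_atBot.comp (tendsto_id.const_mul_atTop_of_neg hc)

theorem deriv_eq_neg_mul_of_tendsto_atTop {α a : ℝ} (hα : 0 < α) {h h' : ℝ → ℝ}
    (hd : ∀ x ∈ Ioi a, HasDerivAt h (h' x) x)
    (hd' : ∀ x ∈ Ioi a, HasDerivAt h' (α ^ 2 * h x) x)
    (htop : Tendsto h atTop (𝓝 0)) : ∀ x ∈ Ioi a, h' x = -α * h x := by
  obtain ⟨C, hC⟩ := isOpen_Ioi.exists_eq_mul_exp_of_hasDerivAt isPreconnected_Ioi
    (w := fun x => h' x + α * h x) (c := α)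
    fun x hx => ((hd' x hx).add ((hd x hx).const_mul α)).congr_deriv (by ring)
  obtain ⟨D, hD⟩ := isOpen_Ioi.exists_eq_mul_exp_of_hasDerivAt isPreconnected_Ioi
    (w := fun x => h' x - α * h x) (c := -α)
    fun x hx => ((hd' x hx).sub ((hd x hx).const_mul α)).congr_deriv (by ring)
  -- `2α h = C e^{αx} - D e^{-αx}` and `h → 0` force `C = 0`.
  have hdecay : Tendsto (fun x => 2 * α * h x * exp (-α * x)) atTop (𝓝 0) := by
    simpa using (htop.const_mul (2 * α)).mul (tendsto_exp_mul_atTop_nhds_zero (neg_lt_zero.2 hα))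
  have hlimit : Tendsto (fun x => C - D * exp (-(2 * α) * x)) atTop (𝓝 C) := by
    simpa using (tendsto_exp_mul_atTop_nhds_zero (by linarith : -(2 * α) < 0)).const_mul D
      |>.const_sub C
  have heq : (fun x => C - D * exp (-(2 * α) * x)) =ᶠ[atTop]
      fun x => 2 * α * h x * exp (-α * x) := by
    filter_upwards [eventually_gt_atTop a] with x hx
    have hsum : 2 * α * h x = C * exp (α * x) - D * exp (-α * x) := by
      linarith [hC x hx, hD x hx]
    rw [hsum, sub_mul, mul_assoc, mul_assoc, ← exp_add, ← exp_add]
    ring_nf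
    rw [exp_zero, mul_one]
  have hC0 : C = 0 := tendsto_nhds_unique (hlimit.congr' heq) hdecay
  intro x hx
  have hw := hC x hx
  rw [hC0, zero_mul] at hw
  linarith

theorem eq_neg_mul_of_tendsto_nhdsGT {α a b l : ℝ} (hα : 0 < α) {h h' : ℝ → ℝ}
    (hd : ∀ x ∈ Ioi a, HasDerivAt h (h' x) x)
    (hd' : ∀ x ∈ Ioi a, HasDerivAt h' (α ^ 2 * h x) x)
    (htop : Tendsto h atTop (𝓝 0)) (hh : Tendsto h (𝓝[>] a) (𝓝 b))
    (hh' : Tendsto h' (𝓝[>] a) (𝓝 l)) : l = -α * b :=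
  tendsto_nhds_unique hh' <| (hh.const_mul (-α)).congr'
    (eventuallyEq_of_mem self_mem_nhdsWithin (deriv_eq_neg_mul_of_tendsto_atTop hα hd hd' htop)).symm

theorem eq_mul_of_tendsto_nhdsLT {α a b l : ℝ} (hα : 0 < α) {h h' : ℝ → ℝ}
    (hd : ∀ x ∈ Iio a, HasDerivAt h (h' x) x)
    (hd' : ∀ x ∈ Iio a, HasDerivAt h' (α ^ 2 * h x) x)
    (hbot : Tendsto h atBot (𝓝 0)) (hh : Tendsto h (𝓝[<] a) (𝓝 b))
    (hh' : Tendsto h' (𝓝[<] a) (𝓝 l)) : l = α * b := by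
  have hmem : ∀ x ∈ Ioi (-a), -x ∈ Iio a := fun x hx => mem_Iio.2 (neg_lt.1 hx)
  have hreflected := eq_neg_mul_of_tendsto_nhdsGT hα (h := fun x => h (-x))
    (h' := fun x => -h' (-x))
    (fun x hx => ((hd (-x) (hmem x hx)).comp x (hasDerivAt_neg x)).congr_deriv (by ring))
    (fun x hx => ((hd' (-x) (hmem x hx)).comp x (hasDerivAt_neg x)).neg.congr_deriv (by ring))
    (hbot.comp tendsto_neg_atTop_atBot) (hh.comp tendsto_neg_nhdsGT_neg)
    (hh'.comp tendsto_neg_nhdsGT_neg).neg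
  linarith

theorem ContDiffAt.hasDerivAt_deriv {𝕜 F : Type*} [NontriviallyNormedField 𝕜]
    [NormedAddCommGroup F] [NormedSpace 𝕜 F] {f : 𝕜 → F} {x : 𝕜} (hf : ContDiffAt 𝕜 2 f x) :
    HasDerivAt (deriv f) (deriv (deriv f) x) x :=
  ((hf.derivWithin (m := 1) le_rfl).differentiableAt one_ne_zero).hasDerivAt

theorem sub_eq_neg_two_mul_of_contDiffAt {α c r l : ℝ} (hα : 0 < α) {f : ℝ → ℝ}
    (hc : ContinuousAt f c) (hs : ∀ x, x ≠ c → ContDiffAt ℝ 2 f x)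
    (hode : ∀ x, x ≠ c → deriv (deriv f) x = α ^ 2 * f x)
    (htop : Tendsto f atTop (𝓝 0)) (hbot : Tendsto f atBot (𝓝 0))
    (hr : Tendsto (deriv f) (𝓝[>] c) (𝓝 r)) (hl : Tendsto (deriv f) (𝓝[<] c) (𝓝 l)) :
    r - l = -(2 * α * f c) := by
  have hd : ∀ x, x ≠ c → HasDerivAt f (deriv f x) x := fun x hx =>
    ((hs x hx).differentiableAt two_ne_zero).hasDerivAt
  have hd' : ∀ x, x ≠ c → HasDerivAt (deriv f) (α ^ 2 * f x) x := fun x hx =>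
    hode x hx ▸ (hs x hx).hasDerivAt_deriv
  have hr' := eq_neg_mul_of_tendsto_nhdsGT hα (fun x hx => hd x hx.ne') (fun x hx => hd' x hx.ne')
    htop (hc.tendsto.mono_left nhdsWithin_le_nhds) hr
  have hl' := eq_mul_of_tendsto_nhdsLT hα (fun x hx => hd x hx.ne) (fun x hx => hd' x hx.ne)
    hbot (hc.tendsto.mono_left nhdsWithin_le_nhds) hl
  rw [hr', hl']
  ring

theorem eq_half_sqrt_mul_of_two_mul_eq {α p q x y : ℝ} (hα : 0 < α)
    (hx : 2 * α * x = p * y) (hy : 2 * α * y = q * x) (hne : ¬(x = 0 ∧ y = 0)) :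
    α = 1 / 2 * √(p * q) := by
  have hx0 : x ≠ 0 := fun h0 => hne ⟨h0, by simpa [h0, hα.ne'] using hy⟩
  have hy0 : y ≠ 0 := fun h0 => hne ⟨by simpa [h0, hα.ne'] using hx, h0⟩
  have hpq : p * q = (2 * α) ^ 2 := mul_right_cancel₀ (mul_ne_zero hx0 hy0) <| by
    linear_combination (-(2 * α * y)) * hx - p * y * hy
  rw [hpq, Real.sqrt_sq (by positivity)]
  ring

theorem stmt_18_general (α p q : ℝ) (hα : α > 0)
    (f g : ℝ → ℝ)
    (hfc : Continuous f) (hgc : Continuous g)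
    (hfs : ∀ η : ℝ, η ≠ 0 → ContDiffAt ℝ 2 f η)
    (hgs : ∀ η : ℝ, η ≠ 0 → ContDiffAt ℝ 2 g η)
    (hfode : ∀ η : ℝ, η ≠ 0 → deriv (deriv f) η = α ^ 2 * f η)
    (hgode : ∀ η : ℝ, η ≠ 0 → deriv (deriv g) η = α ^ 2 * g η)
    (hftop : Filter.Tendsto f Filter.atTop (nhds 0))
    (hfbot : Filter.Tendsto f Filter.atBot (nhds 0))
    (hgtop : Filter.Tendsto g Filter.atTop (nhds 0))
    (hgbot : Filter.Tendsto g Filter.atBot (nhds 0))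
    (af bf ag bg : ℝ)
    (hfr : Filter.Tendsto (deriv f) (nhdsWithin 0 (Set.Ioi 0)) (nhds af))
    (hfl : Filter.Tendsto (deriv f) (nhdsWithin 0 (Set.Iio 0)) (nhds bf))
    (hgr : Filter.Tendsto (deriv g) (nhdsWithin 0 (Set.Ioi 0)) (nhds ag))
    (hgl : Filter.Tendsto (deriv g) (nhdsWithin 0 (Set.Iio 0)) (nhds bg))
    (hjf : af - bf = -p * g 0)
    (hjg : ag - bg = -q * f 0)
    (hne : ¬(f 0 = 0 ∧ g 0 = 0)) :
    α = (1 / 2) * Real.sqrt (p * q) := by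
  have hjump_f := sub_eq_neg_two_mul_of_contDiffAt hα hfc.continuousAt hfs hfode hftop hfbot hfr hfl
  have hjump_g := sub_eq_neg_two_mul_of_contDiffAt hα hgc.continuousAt hgs hgode hgtop hgbot hgr hgl
  exact eq_half_sqrt_mul_of_two_mul_eq hα (by linarith) (by linarith) hne

theorem stmt_18 (α p q : ℝ) (hα : α > 0) (hpq : p * q > 0)
    (f g : ℝ → ℝ)
    (hfc : Continuous f) (hgc : Continuous g)
    (hfs : ∀ η : ℝ, η ≠ 0 → ContDiffAt ℝ 2 f η)
    (hgs : ∀ η : ℝ, η ≠ 0 → ContDiffAt ℝ 2 g η)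
    (hfode : ∀ η : ℝ, η ≠ 0 → deriv (deriv f) η = α ^ 2 * f η)
    (hgode : ∀ η : ℝ, η ≠ 0 → deriv (deriv g) η = α ^ 2 * g η)
    (hftop : Filter.Tendsto f Filter.atTop (nhds 0))
    (hfbot : Filter.Tendsto f Filter.atBot (nhds 0))
    (hgtop : Filter.Tendsto g Filter.atTop (nhds 0))
    (hgbot : Filter.Tendsto g Filter.atBot (nhds 0))
    (af bf ag bg : ℝ)
    (hfr : Filter.Tendsto (deriv f) (nhdsWithin 0 (Set.Ioi 0)) (nhds af))
    (hfl : Filter.Tendsto (deriv f) (nhdsWithin 0 (Set.Iio 0)) (nhds bf))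
    (hgr : Filter.Tendsto (deriv g) (nhdsWithin 0 (Set.Ioi 0)) (nhds ag))
    (hgl : Filter.Tendsto (deriv g) (nhdsWithin 0 (Set.Iio 0)) (nhds bg))
    (hjf : af - bf = -p * g 0)
    (hjg : ag - bg = -q * f 0)
    (hne : ¬(f 0 = 0 ∧ g 0 = 0)) :
    α = (1 / 2) * Real.sqrt (p * q) :=
  stmt_18_general α p q hα f g hfc hgc hfs hgs hfode hgode hftop hfbot hgtop hgbot af bf ag bg hfr
    hfl hgr hgl hjf hjg hne
end
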